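/- For all x, y, z ∈ ℝ with arc(x, y) ≤ arc(x, z), one has arc(x, z) − arc(x, y) ≥ cos(x − y) − cos(x − z) ≥ (arc(x, z) − arc(x, y))² / 30. (Lemma E.1, claim 2.) -/
import Mathlib

/-- `Z(γ)`: the unique element of `[0, 2π)` such that `γ - Z(γ)` is an integer multiple of `2π`. -/
noncomputable def Zmod2pi (γ : ℝ) : ℝ := γ - 2 * Real.pi * (⌊γ / (2 * Real.pi)⌋ : ℝ)

/-- `arc(α, β)`: the arc-length distance between the angles `α` and `β` on the unit circle. -/
noncomputable def arc (α β : ℝ) : ℝ := min (Zmod2pi (β - α)) (Zmod2pi (α - β))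

open Real

lemma Zmod2pi_eq (γ : ℝ) : Zmod2pi γ = 2 * π * Int.fract (γ / (2 * π)) := by
  have hπ : (2 * π) ≠ 0 := by positivity
  rw [Zmod2pi, Int.fract]
  field_simp

lemma Zmod2pi_nonneg (γ : ℝ) : 0 ≤ Zmod2pi γ := by
  rw [Zmod2pi_eq]
  have := Int.fract_nonneg (γ / (2 * π))
  positivity

lemma Zmod2pi_lt (γ : ℝ) : Zmod2pi γ < 2 * π := by
  rw [Zmod2pi_eq]
  have h1 := Int.fract_lt_one (γ / (2 * π))
  have h2 : (0:ℝ) < 2 * π := by positivity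
  calc 2 * π * Int.fract (γ / (2 * π)) < 2 * π * 1 := by
        exact mul_lt_mul_of_pos_left h1 h2
    _ = 2 * π := by ring

lemma cos_Zmod2pi (γ : ℝ) : Real.cos (Zmod2pi γ) = Real.cos γ := by
  rw [Zmod2pi]
  have : γ - 2 * π * (⌊γ / (2 * π)⌋ : ℝ) = γ + (-⌊γ / (2 * π)⌋ : ℤ) * (2 * π) := by
    push_cast; ring
  rw [this, Real.cos_add_int_mul_two_pi]

lemma arc_nonneg (α β : ℝ) : 0 ≤ arc α β :=
  le_min (Zmod2pi_nonneg _) (Zmod2pi_nonneg _)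

lemma arc_le_pi (α β : ℝ) : arc α β ≤ π := by
  set u := Zmod2pi (β - α)
  set v := Zmod2pi (α - β)
  have hsum : u + v = 2 * π * (-(⌊(β - α) / (2 * π)⌋ + ⌊(α - β) / (2 * π)⌋) : ℤ) := by
    simp only [u, v, Zmod2pi]; push_cast; ring
  set k : ℤ := -(⌊(β - α) / (2 * π)⌋ + ⌊(α - β) / (2 * π)⌋)
  have hπ : (0:ℝ) < 2 * π := by positivity
  have hlt : u + v < 4 * π := by
    have := Zmod2pi_lt (β - α); have := Zmod2pi_lt (α - β); linarith
  have hk : (k:ℝ) < 2 := by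
    by_contra hk
    push_neg at hk
    have : (4:ℝ) * π ≤ 2 * π * k := by nlinarith
    linarith [hsum ▸ this]
  have hk' : u + v ≤ 2 * π := by
    have hk2 : k < 2 := by exact_mod_cast hk
    have : (k:ℝ) ≤ 1 := by exact_mod_cast (show k ≤ 1 by omega)
    rw [hsum]; nlinarith
  rcases le_total u v with huv | huv
  · rw [arc, min_eq_left huv]; linarith
  · rw [arc, min_eq_right huv]; linarith

lemma cos_arc (α β : ℝ) : Real.cos (arc α β) = Real.cos (α - β) := by
  rcases min_cases (Zmod2pi (β - α)) (Zmod2pi (α - β)) with ⟨he, _⟩ | ⟨he, _⟩ <;>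
    rw [arc, he, cos_Zmod2pi]
  · rw [← Real.cos_neg]; ring_nf

-- main real inequality
lemma key {a b : ℝ} (ha : 0 ≤ a) (hab : a ≤ b) (hb : b ≤ π) :
    Real.cos a - Real.cos b ≤ b - a ∧ (b - a) ^ 2 / 30 ≤ Real.cos a - Real.cos b := by
  have hπ := Real.pi_gt_three
  set s := (a + b) / 2 with hs
  set t := (b - a) / 2 with ht
  have ht0 : 0 ≤ t := by simp [ht]; linarith
  have htle : t ≤ π / 2 := by simp [ht]; linarith
  have hst : t ≤ s := by simp [hs, ht]; linarith
  have hsle : s ≤ π - t := by simp [hs, ht]; linarith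
  have hcc : Real.cos a - Real.cos b = 2 * Real.sin s * Real.sin t := by
    rw [Real.cos_sub_cos, hs, ht, show (a - b) / 2 = -((b - a) / 2) by ring, Real.sin_neg]; ring
  have hsin_t : 2 / π * t ≤ Real.sin t := Real.mul_le_sin ht0 htle
  have hsin_s : Real.sin t ≤ Real.sin s := by
    rcases le_or_gt s (π / 2) with hsp | hsp
    · exact Real.sin_le_sin_of_le_of_le_pi_div_two (by linarith) hsp hst
    · rw [← Real.sin_pi_sub s]
      exact Real.sin_le_sin_of_le_of_le_pi_div_two (by linarith) (by linarith) (by linarith)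
  have hsint0 : 0 ≤ Real.sin t := le_trans (by positivity) hsin_t
  have hsint1 : Real.sin t ≤ t := Real.sin_le ht0
  constructor
  · rw [hcc]
    have h1 : Real.sin s ≤ 1 := Real.sin_le_one s
    nlinarith
  · rw [hcc]
    have hps : π ^ 2 < 60 := by nlinarith [Real.pi_lt_d2]
    have h2 : 2 / π * t ≤ Real.sin s := le_trans hsin_t hsin_s
    have : (b - a) = 2 * t := by simp [ht]; ring
    rw [this]
    have hπ0 : (0:ℝ) < π := by linarith
    have hsins0 : 0 ≤ Real.sin s := hsint0.trans hsin_s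
    have hmul := mul_le_mul hsin_t h2 (by positivity) hsint0
    have h3 : 4 * t ^ 2 ≤ π ^ 2 * (Real.sin t * Real.sin s) := by
      have heq : (2 / π * t) * (2 / π * t) = 4 * t ^ 2 / π ^ 2 := by field_simp; ring
      rw [heq] at hmul
      calc 4 * t ^ 2 = π ^ 2 * (4 * t ^ 2 / π ^ 2) := by field_simp
        _ ≤ π ^ 2 * (Real.sin t * Real.sin s) := by nlinarith
    nlinarith [h3, hps, mul_nonneg hsint0 hsins0]

/-- Lemma E.1, claim 2. -/
theorem arc_cos_ineq (x y z : ℝ) (h : arc x y ≤ arc x z) :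
    Real.cos (x - y) - Real.cos (x - z) ≤ arc x z - arc x y ∧
    (arc x z - arc x y) ^ 2 / 30 ≤ Real.cos (x - y) - Real.cos (x - z) := by
  have h1 := cos_arc x y
  have h2 := cos_arc x z
  have := key (arc_nonneg x y) h (arc_le_pi x z)
  rw [h1, h2] at this
  exact this
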